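/- Let λ, μ ∈ Λ(N,r), let d ∈ D_{λμ}, and set a_{i,j} = |N_i^λ ∩ d(N_j^μ)| for 1 ≤ i, j ≤ N. Then d⁻¹ W_λ d ∩ W_μ = W_ν, where ν ∈ Λ(N²,r) is the column-reading composition ν = (a_{1,1}, a_{2,1}, …, a_{N,1}, a_{1,2}, a_{2,2}, …, a_{N,2}, …, a_{1,N}, …, a_{N,N}); in particular, d⁻¹ W_λ d ∩ W_μ is a Young subgroup of W. -/

import Mathlib

open Equiv Finset

/-- The simple transposition `s i = (i, i+1)` (1-based) in the symmetric group `W` on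
`{1, …, r}`, realised as `Equiv.Perm (Fin r)`, where the point `x : Fin r` carries the
label `x.val + 1`.  For `i` outside the range `1 ≤ i < r` we set `s i = 1`. -/
def sT (r : ℕ) (i : ℕ) : Equiv.Perm (Fin r) :=
  if h : 1 ≤ i ∧ i < r then Equiv.swap ⟨i - 1, by omega⟩ ⟨i, h.2⟩ else 1

/-- The ascending product `s_a · s_{a+1} ⋯ s_{a+n-1}` (equal to `1` when `n = 0`);
the rightmost factor acts first. -/
def ascProd (r a n : ℕ) : Equiv.Perm (Fin r) :=
  ((List.range n).map (fun t => sT r (a + t))).prod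

/-- The descending product `s_b · s_{b-1} ⋯ s_{b-n+1}` (equal to `1` when `n = 0`);
the rightmost factor acts first. -/
def descProd (r b n : ℕ) : Equiv.Perm (Fin r) :=
  ((List.range n).map (fun t => sT r (b - t))).prod

/-- The Coxeter length `ℓ(w)`, i.e. the number of inversions of `w`. -/
def clen {r : ℕ} (w : Equiv.Perm (Fin r)) : ℕ :=
  (Finset.univ.filter (fun p : Fin r × Fin r => p.1 < p.2 ∧ w p.2 < w p.1)).card

/-- `ptil lam i` is the partial sum `λ̃_i = λ_1 + ⋯ + λ_i` (1-based `i`). -/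
def ptil {N : ℕ} (lam : Fin N → ℕ) (i : ℕ) : ℕ :=
  ∑ l : Fin N, if l.val + 1 ≤ i then lam l else 0

/-- The block `N_i^λ = {λ̃_{i-1}+1, …, λ̃_i}` (1-based `i`), as a set of points of `Fin r`
(the point `x` has label `x.val + 1`). -/
def blockSet (r : ℕ) {N : ℕ} (lam : Fin N → ℕ) (i : ℕ) : Finset (Fin r) :=
  Finset.univ.filter (fun x => ptil lam (i - 1) ≤ x.val ∧ x.val < ptil lam i)

/-- The index of the block of `λ` containing the point `x`. -/
def blockOf {r N : ℕ} (lam : Fin N → ℕ) (x : Fin r) : ℕ :=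
  ((Finset.range N).filter (fun i => ptil lam (i + 1) ≤ x.val)).card

/-- The Young subgroup `W_λ`: all permutations stabilizing each block `N_i^λ`. -/
def young (r : ℕ) {N : ℕ} (lam : Fin N → ℕ) : Subgroup (Equiv.Perm (Fin r)) where
  carrier := {w | ∀ x : Fin r, blockOf lam (w x) = blockOf lam x}
  one_mem' := by intro x; rfl
  mul_mem' := by
    intro a b ha hb x
    have h := (ha (b x)).trans (hb x)
    simpa [Equiv.Perm.mul_apply] using h
  inv_mem' := by
    intro a ha x
    have h := ha (a⁻¹ x)
    simpa using h.symm

/-- The double coset `W_λ d W_μ`, as a set of permutations. -/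
def dcoset (r : ℕ) {N : ℕ} (lam mu : Fin N → ℕ) (d : Equiv.Perm (Fin r)) :
    Set (Equiv.Perm (Fin r)) :=
  {w | ∃ x ∈ young r lam, ∃ y ∈ young r mu, w = x * d * y}

/-- `d ∈ 𝒟_{λμ}`: `d` has minimal length in its double coset `W_λ d W_μ`. -/
def isMinRep (r : ℕ) {N : ℕ} (lam mu : Fin N → ℕ) (d : Equiv.Perm (Fin r)) : Prop :=
  ∀ w ∈ dcoset r lam mu d, clen d ≤ clen w

/-- The composition `ro M` of row sums of a matrix. -/
def rowSums {N : ℕ} (M : Fin N → Fin N → ℕ) : Fin N → ℕ := fun i => ∑ j, M i j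

/-- The composition `co M` of column sums of a matrix. -/
def colSums {N : ℕ} (M : Fin N → Fin N → ℕ) : Fin N → ℕ := fun j => ∑ i, M i j

/-- `d` is the distinguished double coset representative `d_M` attached to the matrix `M`:
`d` is the minimal length element in its `(W_{ro M}, W_{co M})` double coset, and
`|N_i^{ro M} ∩ d(N_j^{co M})| = m_{i,j}` for all `i, j`. -/
def isDM (r : ℕ) {N : ℕ} (M : Fin N → Fin N → ℕ) (d : Equiv.Perm (Fin r)) : Prop :=
  isMinRep r (rowSums M) (colSums M) d ∧
    ∀ i j : Fin N,
      ((blockSet r (rowSums M) (i.val + 1)) ∩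
        (blockSet r (colSums M) (j.val + 1)).image d).card = M i j

/-- The `(i,j)` entry of `M` with 1-based indices (`0` outside the range). -/
def ent {N : ℕ} (M : Fin N → Fin N → ℕ) (i j : ℕ) : ℕ :=
  if h : 1 ≤ i ∧ i ≤ N ∧ 1 ≤ j ∧ j ≤ N then M ⟨i - 1, by omega⟩ ⟨j - 1, by omega⟩ else 0

/-- `μ̃_{j-1}` for `μ = co M`: the sum of the first `j - 1` column sums of `M`. -/
def colPS {N : ℕ} (M : Fin N → Fin N → ℕ) (j : ℕ) : ℕ :=
  ∑ p : Fin N × Fin N, if p.2.val + 1 < j then M p.1 p.2 else 0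

/-- `σ_{i,j} = μ̃_{j-1} + Σ_{k ≤ i, l ≥ j} m_{k,l}` (1-based `i, j`). -/
def sigmaS {N : ℕ} (M : Fin N → Fin N → ℕ) (i j : ℕ) : ℕ :=
  colPS M j + ∑ p : Fin N × Fin N, if p.1.val + 1 ≤ i ∧ j ≤ p.2.val + 1 then M p.1 p.2 else 0

/-- `m̃_{i,j} = μ̃_{j-1} + Σ_{h ≤ i} m_{h,j}` (1-based `i, j`): the partial sum of the
column-reading sequence of `M` up to the entry `(i, j)`. -/
def mtil {N : ℕ} (M : Fin N → Fin N → ℕ) (i j : ℕ) : ℕ :=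
  colPS M j + ∑ p : Fin N × Fin N, if p.1.val + 1 ≤ i ∧ p.2.val + 1 = j then M p.1 p.2 else 0

/-- The element `w_{i,j}` (1-based `i, j`):
`w_{i,j} = (s_{σ_{i-1,j}} ⋯ s_{m̃_{i-1,j}+1})(s_{σ_{i-1,j}+1} ⋯ s_{m̃_{i-1,j}+2}) ⋯
(s_{σ_{i-1,j}+m_{i,j}-1} ⋯ s_{m̃_{i,j}})`, with `w_{i,j} = 1` when `m_{i,j} = 0` or
`σ_{i-1,j} = m̃_{i-1,j}`. -/
def wE (r : ℕ) {N : ℕ} (M : Fin N → Fin N → ℕ) (i j : ℕ) : Equiv.Perm (Fin r) :=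
  ((List.range (ent M i j)).map
    (fun x => descProd r (sigmaS M (i - 1) j + x) (sigmaS M (i - 1) j - mtil M (i - 1) j))).prod

/-- The column product `w_{2,j} w_{3,j} ⋯ w_{N,j}`. -/
def colProd (r : ℕ) {N : ℕ} (M : Fin N → Fin N → ℕ) (j : ℕ) : Equiv.Perm (Fin r) :=
  ((List.range (N - 1)).map (fun t => wE r M (t + 2) j)).prod

/-- `Π_t`: the product of the first `t` column products
`(w_{2,1} ⋯ w_{N,1})(w_{2,2} ⋯ w_{N,2}) ⋯ (w_{2,t} ⋯ w_{N,t})`. -/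
def piProd (r : ℕ) {N : ℕ} (M : Fin N → Fin N → ℕ) (t : ℕ) : Equiv.Perm (Fin r) :=
  ((List.range t).map (fun c => colProd r M (c + 1))).prod

/-!
Label each point `z` by the cell `(i, j)` of the matrix `(a_{i,j})` that contains it, where `i`
is the `λ`-block of `d z` and `j` the `μ`-block of `z`, and read the cells column by column.
Since `d` has minimal length in `W_λ d W_μ`, it has no descent inside a `μ`-block, so this
column-reading position is weakly increasing in `z`; hence it is exactly the block map of `ν`.
A permutation `w` preserves it iff `w` preserves the `μ`-blocks and `d w d⁻¹` the `λ`-blocks.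
-/

section Blocks

variable {N : ℕ} (lam : Fin N → ℕ)

lemma ptil_mono : Monotone (ptil lam) := fun _ _ hij =>
  sum_le_sum fun _ _ => by split_ifs <;> omega

lemma ptil_zero : ptil lam 0 = 0 :=
  sum_eq_zero fun _ _ => if_neg (by omega)

lemma ptil_of_le {i : ℕ} (hi : N ≤ i) : ptil lam i = ∑ l, lam l :=
  sum_congr rfl fun _ _ => if_pos (by omega)

variable {lam}

lemma lt_of_ptil_le_of_lt {i x : ℕ} (h₁ : ptil lam i ≤ x) (h₂ : x < ptil lam (i + 1)) :
    i < N := by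
  by_contra! hi
  rw [ptil_of_le lam hi, ptil_of_le lam (by omega)] at *
  omega

lemma blockOf_eq_of_ptil_le_of_lt {r i : ℕ} {x : Fin r} (h₁ : ptil lam i ≤ x)
    (h₂ : x < ptil lam (i + 1)) : blockOf lam x = i := by
  have hiN := lt_of_ptil_le_of_lt h₁ h₂
  have hS : (range N).filter (fun k => ptil lam (k + 1) ≤ x) = range i := by
    ext k
    simp only [mem_filter, mem_range]
    constructor
    · rintro ⟨-, hk⟩
      by_contra! hik
      have := ptil_mono lam (show i + 1 ≤ k + 1 by omega)
      omega
    · intro hk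
      exact ⟨by omega, (ptil_mono lam (show k + 1 ≤ i by omega)).trans h₁⟩
  rw [blockOf, hS, card_range]

lemma exists_ptil_le_lt {x : ℕ} (hx : x < ptil lam N) :
    ∃ i, ptil lam i ≤ x ∧ x < ptil lam (i + 1) := by
  classical
  have hex : ∃ k, x < ptil lam k := ⟨N, hx⟩
  have hpos : Nat.find hex ≠ 0 := fun h => by
    have := Nat.find_spec hex
    rw [h, ptil_zero] at this
    omega
  refine ⟨Nat.find hex - 1, not_lt.mp (Nat.find_min hex (by omega)), ?_⟩
  rw [Nat.sub_add_cancel (Nat.pos_of_ne_zero hpos)]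
  exact Nat.find_spec hex

lemma ptil_blockOf_le_and_lt {r : ℕ} (hlam : ∑ i, lam i = r) (x : Fin r) :
    ptil lam (blockOf lam x) ≤ x ∧ x < ptil lam (blockOf lam x + 1) := by
  obtain ⟨i, h₁, h₂⟩ := exists_ptil_le_lt (lam := lam) (x := x)
    (by rw [ptil_of_le lam le_rfl, hlam]; exact x.isLt)
  rw [blockOf_eq_of_ptil_le_of_lt h₁ h₂]
  exact ⟨h₁, h₂⟩

lemma blockOf_lt {r : ℕ} (hlam : ∑ i, lam i = r) (x : Fin r) : blockOf lam x < N :=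
  lt_of_ptil_le_of_lt (ptil_blockOf_le_and_lt hlam x).1 (ptil_blockOf_le_and_lt hlam x).2

lemma mem_blockSet_succ_iff {r : ℕ} (hlam : ∑ i, lam i = r) {x : Fin r} {i : ℕ} :
    x ∈ blockSet r lam (i + 1) ↔ blockOf lam x = i := by
  rw [blockSet, mem_filter, Nat.add_sub_cancel]
  constructor
  · rintro ⟨-, h₁, h₂⟩
    exact blockOf_eq_of_ptil_le_of_lt h₁ h₂
  · rintro rfl
    exact ⟨mem_univ x, ptil_blockOf_le_and_lt hlam x⟩

variable (lam) in
lemma blockOf_mono {r : ℕ} : Monotone (blockOf lam : Fin r → ℕ) := fun _ _ hxy =>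
  card_le_card <| monotone_filter_right _ fun _ _ hk => hk.trans hxy

end Blocks

section MonotoneBlockMap

variable {r K : ℕ} (g : Fin r → Fin K) {nu : Fin K → ℕ}

lemma ptil_eq_card_of_fiber (hnu : ∀ t, nu t = #{z | g z = t}) (t : ℕ) :
    ptil nu t = #{z | (g z : ℕ) < t} := by
  classical
  rw [card_eq_sum_card_fiberwise (f := g) (t := univ) (fun _ _ => mem_coe.mpr (mem_univ _)),
    ptil]
  refine sum_congr rfl fun l _ => ?_
  rw [hnu, filter_filter]
  split_ifs with hl
  · congr 1
    ext z
    simp only [mem_filter, mem_univ, true_and]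
    constructor
    · intro h; exact ⟨by rw [h]; omega, h⟩
    · exact And.right
  · rw [eq_comm, card_eq_zero, filter_eq_empty_iff]
    rintro z - ⟨hz, rfl⟩
    omega

lemma blockOf_eq_of_monotone (hg : Monotone g) (hnu : ∀ t, nu t = #{z | g z = t}) (x : Fin r) :
    blockOf nu x = g x := by
  classical
  apply blockOf_eq_of_ptil_le_of_lt
  · rw [ptil_eq_card_of_fiber g hnu, ← Fin.card_Iio x]
    refine card_le_card fun z hz => ?_
    simp only [mem_filter, mem_univ, true_and, mem_Iio] at hz ⊢
    by_contra! hxz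
    exact absurd (hg hxz) (not_le.mpr hz)
  · rw [ptil_eq_card_of_fiber g hnu, Nat.lt_iff_add_one_le, ← Fin.card_Iic x]
    refine card_le_card fun z hz => ?_
    simp only [mem_filter, mem_univ, true_and, mem_Iic] at hz ⊢
    exact Nat.lt_succ_of_le (hg hz)

end MonotoneBlockMap

section Length

variable {r : ℕ}

lemma swap_lt_swap_of_lt {a b p q : Fin r} (hab : (a : ℕ) + 1 = b) (hpq : p < q)
    (hne : (p, q) ≠ (a, b)) : swap a b p < swap a b q := by
  rw [Fin.lt_def] at hpq ⊢
  simp only [ne_eq, Prod.mk.injEq, Fin.ext_iff] at hne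
  simp only [swap_apply_def]
  split_ifs <;> simp only [Fin.ext_iff] at * <;> omega

lemma clen_mul_swap_lt (w : Perm (Fin r)) {a b : Fin r} (hab : (a : ℕ) + 1 = b)
    (hw : w b < w a) : clen (w * swap a b) < clen w := by
  classical
  set S := univ.filter fun p : Fin r × Fin r => p.1 < p.2 ∧ w p.2 < w p.1
  have hab' : a < b := by rw [Fin.lt_def]; omega
  have habS : (a, b) ∈ S := mem_filter.mpr ⟨mem_univ _, hab', hw⟩
  let σ : Fin r × Fin r ≃ Fin r × Fin r := (swap a b).prodCongr (swap a b)
  -- right multiplication by `swap a b` relabels the inversions, except that it resolves `(a, b)`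
  have hinv : univ.filter (fun p : Fin r × Fin r => p.1 < p.2 ∧ (w * swap a b) p.2 <
      (w * swap a b) p.1) = (S.erase (a, b)).map σ.toEmbedding := by
    ext ⟨p, q⟩
    rw [mem_map_equiv, mem_erase, mem_filter, mem_filter]
    simp only [σ, prodCongr_symm, symm_swap, prodCongr_apply, Prod.map, mem_univ, true_and,
      Perm.mul_apply]
    constructor
    · rintro ⟨hpq, hwpq⟩
      have hne : (p, q) ≠ (a, b) := by
        rintro ⟨⟩
        rw [swap_apply_left, swap_apply_right] at hwpq
        exact lt_asymm hw hwpq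
      refine ⟨fun h => ?_, swap_lt_swap_of_lt hab hpq hne, hwpq⟩
      simp only [Prod.mk.injEq, swap_apply_eq_iff, swap_apply_left, swap_apply_right] at h
      exact lt_asymm hab' (h.1 ▸ h.2 ▸ hpq)
    · rintro ⟨hne, hpq, hwpq⟩
      simpa using And.intro (swap_lt_swap_of_lt hab hpq hne) hwpq
  change #(univ.filter _) < #S
  rw [hinv, card_map, card_erase_of_mem habS]
  exact Nat.sub_lt (card_pos.mpr ⟨_, habS⟩) one_pos

end Length

lemma mem_young_iff {r N : ℕ} {lam : Fin N → ℕ} {w : Perm (Fin r)} :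
    w ∈ young r lam ↔ ∀ x, blockOf lam (w x) = blockOf lam x := Iff.rfl

lemma conj_mem_young_iff {r N : ℕ} {lam : Fin N → ℕ} {d w : Perm (Fin r)} :
    d * w * d⁻¹ ∈ young r lam ↔ ∀ x, blockOf lam (d (w x)) = blockOf lam (d x) := by
  rw [mem_young_iff, ← d.forall_congr_right]
  simp only [Perm.mul_apply, Perm.inv_def, symm_apply_apply]

lemma swap_mem_young {r N : ℕ} {lam : Fin N → ℕ} {a b : Fin r}
    (h : blockOf lam a = blockOf lam b) : swap a b ∈ young r lam := fun x => by
  rcases eq_or_ne x a with rfl | hxa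
  · rw [swap_apply_left, h]
  rcases eq_or_ne x b with rfl | hxb
  · rw [swap_apply_right, h]
  rw [swap_apply_of_ne_of_ne hxa hxb]

section MinRep

variable {r N : ℕ} {lam mu : Fin N → ℕ} {d : Perm (Fin r)}

lemma isMinRep.apply_lt_apply_of_succ (hd : isMinRep r lam mu d) {z z' : Fin r}
    (hzz' : (z : ℕ) + 1 = z') (hblock : blockOf mu z = blockOf mu z') : d z < d z' := by
  refine lt_of_le_of_ne (not_lt.mp fun hlt => ?_) (d.injective.ne (by omega))
  have hmem : d * swap z z' ∈ dcoset r lam mu d :=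
    ⟨1, one_mem _, swap z z', swap_mem_young hblock, by rw [one_mul]⟩
  exact absurd (hd _ hmem) (not_le.mpr (clen_mul_swap_lt d hzz' hlt))

end MinRep

section CellIndex

variable {r N : ℕ} {lam mu : Fin N → ℕ} {d : Perm (Fin r)}

variable (lam mu d) in
/-- The 0-based position, in the column reading of the `N × N` matrix `(a_{i,j})`, of the cell
`(λ-block of d z, μ-block of z)`. -/
def cellIndex (z : Fin r) : ℕ :=
  blockOf lam (d z) + N * blockOf mu z

lemma cellIndex_eq_iff (hlam : ∑ i, lam i = r) {z : Fin r} {t : ℕ} :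
    cellIndex lam mu d z = t ↔ t / N = blockOf mu z ∧ t % N = blockOf lam (d z) := by
  have hN : 0 < N := (Nat.zero_le _).trans_lt (blockOf_lt hlam (d z))
  rw [Nat.div_mod_unique hN]
  exact ⟨fun h => ⟨h, blockOf_lt hlam (d z)⟩, And.left⟩

lemma cellIndex_lt (hlam : ∑ i, lam i = r) (hmu : ∑ j, mu j = r) (z : Fin r) :
    cellIndex lam mu d z < N * N :=
  calc cellIndex lam mu d z < N + N * blockOf mu z := by
        unfold cellIndex; have := blockOf_lt hlam (d z); omega
    _ = N * (blockOf mu z + 1) := by ring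
    _ ≤ N * N := Nat.mul_le_mul_left N (blockOf_lt hmu z)

lemma cellIndex_eq_cellIndex_iff (hlam : ∑ i, lam i = r) {z z' : Fin r} :
    cellIndex lam mu d z' = cellIndex lam mu d z ↔
      blockOf mu z' = blockOf mu z ∧ blockOf lam (d z') = blockOf lam (d z) := by
  obtain ⟨hdiv, hmod⟩ := (cellIndex_eq_iff (mu := mu) hlam (z := z)).mp rfl
  rw [cellIndex_eq_iff hlam, hdiv, hmod, eq_comm, @eq_comm _ (blockOf lam (d z))]

-- Minimality of `d` makes it increasing on each `μ`-block, so the cell index can only grow.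
lemma cellIndex_mono (hlam : ∑ i, lam i = r) (hd : isMinRep r lam mu d) :
    Monotone (cellIndex lam mu d) := by
  rcases r with _ | r
  · exact fun x => x.elim0
  refine Fin.monotone_iff_le_succ.mpr fun k => ?_
  have hsucc : (k.castSucc : ℕ) + 1 = k.succ := by simp
  have hmu_le : blockOf mu k.castSucc ≤ blockOf mu k.succ :=
    blockOf_mono mu (Fin.le_iff_val_le_val.mpr (by omega))
  unfold cellIndex
  by_cases hblock : blockOf mu k.castSucc = blockOf mu k.succ
  · rw [hblock]
    exact Nat.add_le_add_right
      (blockOf_mono lam (hd.apply_lt_apply_of_succ hsucc hblock).le) _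
  · have hlt : blockOf lam (d k.castSucc) < N := blockOf_lt hlam _
    have : N * (blockOf mu k.castSucc + 1) ≤ N * blockOf mu k.succ :=
      Nat.mul_le_mul_left N (by omega)
    rw [Nat.mul_succ] at this
    omega

lemma card_inter_image_eq_card_cellIndex (hlam : ∑ i, lam i = r) (hmu : ∑ j, mu j = r)
    (t : ℕ) : #(blockSet r lam (t % N + 1) ∩ (blockSet r mu (t / N + 1)).image d) =
      #{z | cellIndex lam mu d z = t} := by
  rw [← card_image_of_injective {z | cellIndex lam mu d z = t} d.injective]
  congr 1
  ext y
  simp only [mem_inter, mem_image, mem_filter, mem_univ, true_and, mem_blockSet_succ_iff hlam,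
    mem_blockSet_succ_iff hmu, cellIndex_eq_iff hlam]
  constructor
  · rintro ⟨hy, z, hz, rfl⟩
    exact ⟨z, ⟨hz.symm, hy.symm⟩, rfl⟩
  · rintro ⟨z, ⟨hz, hy⟩, rfl⟩
    exact ⟨hy.symm, z, hz.symm, rfl⟩

end CellIndex

/-- equation (2.2)–(2.3).  For `λ, μ ∈ Λ(N,r)`, `d ∈ 𝒟_{λμ}` and
`a_{i,j} = |N_i^λ ∩ d(N_j^μ)|`, one has `d⁻¹ W_λ d ∩ W_μ = W_ν`, where
`ν ∈ Λ(N², r)` is the column-reading composition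
`(a_{1,1}, a_{2,1}, …, a_{N,1}, a_{1,2}, …, a_{N,N})` (position `t` (0-based) holds
`a_{(t % N)+1, (t / N)+1}`); in particular `d⁻¹ W_λ d ∩ W_μ` is a Young subgroup. -/
theorem stmt14 (N r : ℕ) (lam mu : Fin N → ℕ)
    (hlam : ∑ i, lam i = r) (hmu : ∑ j, mu j = r)
    (d : Equiv.Perm (Fin r)) (hd : isMinRep r lam mu d)
    (nu : Fin (N * N) → ℕ)
    (hnu : ∀ t : Fin (N * N), nu t =
      ((blockSet r lam (t.val % N + 1)) ∩ (blockSet r mu (t.val / N + 1)).image d).card) :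
    {w : Equiv.Perm (Fin r) | (d * w * d⁻¹) ∈ young r lam ∧ w ∈ young r mu}
      = (young r nu : Set (Equiv.Perm (Fin r))) := by
  let g : Fin r → Fin (N * N) := fun z => ⟨cellIndex lam mu d z, cellIndex_lt hlam hmu z⟩
  have hblock : ∀ x, blockOf nu x = cellIndex lam mu d x :=
    blockOf_eq_of_monotone g (fun _ _ h => cellIndex_mono hlam hd h) fun t => by
      rw [hnu, card_inter_image_eq_card_cellIndex hlam hmu]
      simp only [g, Fin.ext_iff]
  ext w
  simp only [Set.mem_ofPred_eq, SetLike.mem_coe, conj_mem_young_iff]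
  simp only [mem_young_iff, hblock, cellIndex_eq_cellIndex_iff hlam, forall_and]
  exact and_comm
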